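/- arXiv:1808.03754 — 2 statements merged into one kernel-verified Lean document; each statement's English description precedes it below -/
import Mathlib

section
/- Let r_1, ..., r_n be real numbers, and for ε ≥ 0 let P_ε denote the number of indices i with r_i ≤ −ε and Q_ε the number of indices i with r_i ≥ 1/2 + ε. Suppose that for all real ε ≥ 0 we have P_ε ≤ Q_{2ε + 1/2} and Q_ε ≤ P_{2ε}. Then P_0 = Q_0 = 0; that is, every r_i satisfies 0 < r_i < 1/2. -/
open Classical in
theorem weights_strictly_between_zero_and_half
    {n : ℕ} (r : Fin n → ℝ) (P Q : ℝ → ℕ)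
    (hP : ∀ ε : ℝ, P ε = (Finset.univ.filter fun i => r i ≤ -ε).card)
    (hQ : ∀ ε : ℝ, Q ε = (Finset.univ.filter fun i => 1/2 + ε ≤ r i).card)
    (h1 : ∀ ε : ℝ, 0 ≤ ε → P ε ≤ Q (2*ε + 1/2))
    (h2 : ∀ ε : ℝ, 0 ≤ ε → Q ε ≤ P (2*ε)) :
    P 0 = 0 ∧ Q 0 = 0 ∧ ∀ i, 0 < r i ∧ r i < 1/2 := by
  -- step: P ε ≤ P (4ε+1)
  have hstep : ∀ ε : ℝ, 0 ≤ ε → P ε ≤ P (4*ε + 1) := by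
    intro ε hε
    have := h1 ε hε
    have h2' := h2 (2*ε + 1/2) (by linarith)
    calc P ε ≤ Q (2*ε + 1/2) := this
      _ ≤ P (2*(2*ε + 1/2)) := h2'
      _ = P (4*ε + 1) := by ring_nf
  -- iterate
  let e : ℕ → ℝ := fun k => Nat.rec (0 : ℝ) (fun _ x => 4*x + 1) k
  have he0 : ∀ k : ℕ, 0 ≤ e k := by
    intro k
    induction k with
    | zero => simp [e]
    | succ k ih => show (0:ℝ) ≤ 4 * e k + 1; linarith
  have hek : ∀ k : ℕ, (k : ℝ) ≤ e k := by
    intro k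
    induction k with
    | zero => simp [e]
    | succ k ih =>
      have h := he0 k
      have : e (k+1) = 4 * e k + 1 := rfl
      rw [this]
      push_cast
      linarith
  have hchain : ∀ k : ℕ, P 0 ≤ P (e k) := by
    intro k
    induction k with
    | zero => simp [e]
    | succ k ih =>
      exact ih.trans (hstep (e k) (he0 k))
  -- large ε gives P ε = 0
  set M : ℝ := 1 + ∑ i : Fin n, |r i| with hM
  have hMpos : 0 < M := by
    have : (0:ℝ) ≤ ∑ i : Fin n, |r i| :=
      Finset.sum_nonneg fun i _ => abs_nonneg _
    simp [hM]; linarith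
  have hPbig : ∀ ε : ℝ, M ≤ ε → P ε = 0 := by
    intro ε hε
    rw [hP]
    simp only [Finset.card_eq_zero, Finset.filter_eq_empty_iff]
    intro i _
    have h1 : |r i| ≤ ∑ j : Fin n, |r j| :=
      Finset.single_le_sum (fun j _ => abs_nonneg (r j)) (Finset.mem_univ i)
    have h2 : -(r i) ≤ |r i| := neg_le_abs _
    push_neg
    have : -ε ≤ -M := by linarith
    nlinarith [hε]
  -- conclude
  have hP0 : P 0 = 0 := by
    have hk := hchain ⌈M⌉₊
    have : M ≤ e ⌈M⌉₊ := le_trans (Nat.le_ceil M) (hek _)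
    rw [hPbig _ this] at hk
    omega
  have hQ0 : Q 0 = 0 := by
    have := h2 0 le_rfl
    simp only [mul_zero] at this
    omega
  refine ⟨hP0, hQ0, fun i => ?_⟩
  rw [hP, Finset.card_eq_zero, Finset.filter_eq_empty_iff] at hP0
  rw [hQ, Finset.card_eq_zero, Finset.filter_eq_empty_iff] at hQ0
  have h01 := hP0 (Finset.mem_univ i)
  have h02 := hQ0 (Finset.mem_univ i)
  constructor
  · simpa using not_le.mp (by simpa using h01)
  · have := not_le.mp h02
    linarith
end

section
/- Let F = k⟨x_1,...,x_n⟩ be the free algebra over a commutative ring k and let Φ ∈ F be a linear combination of words w such that each word appearing in Φ is weighted homogeneous of weighted degree N with respect to positive integer weights w_1,...,w_n (the weight of a word is the sum of the weights of its letters). Then Σ_{i=1}^n w_i · x_i · D_i(Φ) ≡ N · Φ modulo the k-submodule spanned by commutators [F,F]. -/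
/-!
Left-multiplying the cyclic derivative `D_i u` of a word `u` by `x_i` produces, for each position
of `u` holding `x_i`, the cyclic rotation of `u` starting at that position. Summing with weights,
`∑ w_i x_i D_i u` is the sum over all positions of the rotations of `u`, each weighted by the
letter brought to the front. A rotation `ba` of `u = ab` agrees with `u` modulo `[F, F]`, so the
sum is congruent to the weight of `u` times `u`; linearity extends this to homogeneous `Φ`.
-/

noncomputable section

variable {k : Type*} [CommRing k] {n : ℕ}

/-- The cyclic rotation of a word that puts position `j+1` at the front,
deleting the letter at position `j`. -/
def cycRot (w : List (Fin n)) (j : ℕ) : List (Fin n) :=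
  w.drop (j + 1) ++ w.take j

/-- The cyclic derivative of a single word with respect to the `i`-th variable. -/
def cycDerivWord (k : Type*) [CommRing k] {n : ℕ} (i : Fin n) (w : List (Fin n)) :
    MonoidAlgebra k (FreeMonoid (Fin n)) :=
  (((List.range w.length).filter fun j => w[j]? = some i).map
    fun j => MonoidAlgebra.single (FreeMonoid.ofList (cycRot w j)) (1 : k)).sum

/-- The cyclic derivative with respect to the `i`-th variable, as a `k`-linear map. -/
def cycDeriv (k : Type*) [CommRing k] {n : ℕ} (i : Fin n) :
    MonoidAlgebra k (FreeMonoid (Fin n)) →ₗ[k] MonoidAlgebra k (FreeMonoid (Fin n)) :=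
  Finsupp.lsum k (fun w =>
    LinearMap.toSpanSingleton k _ (cycDerivWord k i (FreeMonoid.toList w)))
    ∘ₗ (MonoidAlgebra.coeffLinearEquiv k).toLinearMap

/-- The weight of a word: the sum of the weights of its letters. -/
def wordWeight (w : Fin n → ℕ) (u : FreeMonoid (Fin n)) : ℕ :=
  ((FreeMonoid.toList u).map w).sum

open MonoidAlgebra (single single_mul_single)

section CommutatorSpan

variable (R A : Type*) [CommSemiring R] [Ring A] [Algebra R A]

def commutatorSpan : Submodule R A :=
  Submodule.span R {x : A | ∃ f g, x = f * g - g * f}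

variable {R A}

theorem commutator_mem_commutatorSpan (f g : A) : f * g - g * f ∈ commutatorSpan R A :=
  Submodule.subset_span ⟨f, g, rfl⟩

end CommutatorSpan

theorem sum_map_filter_range {M : Type*} [AddCommMonoid M] (m : ℕ) (p : ℕ → Bool) (f : ℕ → M) :
    (((List.range m).filter p).map f).sum = ∑ j ∈ Finset.range m, if p j then f j else 0 := by
  induction m with
  | zero => simp
  | succ m ih =>
    rw [List.range_succ, List.filter_append, List.map_append, List.sum_append, ih,
      Finset.sum_range_succ]
    by_cases h : p m <;> simp [h]

theorem getElem_cons_cycRot (L : List (Fin n)) {j : ℕ} (hj : j < L.length) :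
    L[j] :: cycRot L j = L.rotate j := by
  rw [List.rotate_eq_drop_append_take hj.le, List.drop_eq_getElem_cons hj, cycRot,
    List.cons_append]

theorem single_sub_single_rotate_mem_commutatorSpan (L : List (Fin n)) {j : ℕ}
    (hj : j ≤ L.length) :
    single (FreeMonoid.ofList L) (1 : k) - single (FreeMonoid.ofList (L.rotate j)) 1
      ∈ commutatorSpan k (MonoidAlgebra k (FreeMonoid (Fin n))) := by
  have h := commutator_mem_commutatorSpan (R := k)
    (single (FreeMonoid.ofList (L.take j)) (1 : k)) (single (FreeMonoid.ofList (L.drop j)) 1)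
  rwa [single_mul_single, single_mul_single, one_mul, ← FreeMonoid.ofList_append,
    ← FreeMonoid.ofList_append, List.take_append_drop, ← List.rotate_eq_drop_append_take hj] at h

theorem cycDerivWord_eq_sum (i : Fin n) (L : List (Fin n)) :
    cycDerivWord k i L = ∑ j : Fin L.length,
      if L[(j : ℕ)] = i then single (FreeMonoid.ofList (cycRot L j)) (1 : k) else 0 := by
  rw [cycDerivWord, sum_map_filter_range, ← Fin.sum_univ_eq_sum_range]
  refine Finset.sum_congr rfl fun j _ => ?_
  simp

theorem sum_smul_of_mul_cycDerivWord_eq_sum_rotate (w : Fin n → ℕ) (L : List (Fin n)) :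
    ∑ i, (w i : k) • (single (FreeMonoid.of i) 1 * cycDerivWord k i L)
      = ∑ j : Fin L.length, (w L[(j : ℕ)] : k) • single (FreeMonoid.ofList (L.rotate j)) 1 := by
  simp only [cycDerivWord_eq_sum, Finset.mul_sum, Finset.smul_sum, mul_ite, mul_zero, smul_ite,
    smul_zero]
  rw [Finset.sum_comm]
  refine Finset.sum_congr rfl fun j _ => ?_
  rw [Finset.sum_ite_eq Finset.univ L[(j : ℕ)], if_pos (Finset.mem_univ _), single_mul_single,
    one_mul, ← getElem_cons_cycRot L j.isLt]
  rfl

theorem sum_smul_of_mul_cycDerivWord_sub_mem_commutatorSpan (w : Fin n → ℕ) (L : List (Fin n)) :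
    ∑ i, (w i : k) • (single (FreeMonoid.of i) 1 * cycDerivWord k i L)
        - ((L.map w).sum : k) • single (FreeMonoid.ofList L) 1
      ∈ commutatorSpan k (MonoidAlgebra k (FreeMonoid (Fin n))) := by
  rw [sum_smul_of_mul_cycDerivWord_eq_sum_rotate, ← Fin.sum_univ_fun_getElem, Nat.cast_sum,
    Finset.sum_smul, ← Finset.sum_sub_distrib]
  refine Submodule.sum_mem _ fun j _ => ?_
  rw [← smul_sub, ← neg_sub]
  exact Submodule.smul_mem _ _
    (Submodule.neg_mem _ (single_sub_single_rotate_mem_commutatorSpan L j.isLt.le))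

theorem cycDeriv_single (i : Fin n) (u : FreeMonoid (Fin n)) (c : k) :
    cycDeriv k i (single u c) = c • cycDerivWord k i u.toList := by
  simp [cycDeriv]

def eulerDefect (w : Fin n → ℕ) (N : ℕ) :
    MonoidAlgebra k (FreeMonoid (Fin n)) →ₗ[k] MonoidAlgebra k (FreeMonoid (Fin n)) :=
  ∑ i, (w i : k) • (LinearMap.mulLeft k (single (FreeMonoid.of i) 1) ∘ₗ cycDeriv k i)
    - (N : k) • LinearMap.id

theorem eulerDefect_apply (w : Fin n → ℕ) (N : ℕ) (Φ : MonoidAlgebra k (FreeMonoid (Fin n))) :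
    eulerDefect w N Φ
      = ∑ i, (w i : k) • (single (FreeMonoid.of i) 1 * cycDeriv k i Φ) - (N : k) • Φ := by
  simp [eulerDefect]

theorem eulerDefect_single_mem_commutatorSpan (w : Fin n → ℕ) (u : FreeMonoid (Fin n)) (c : k) :
    eulerDefect w (wordWeight w u) (single u c)
      ∈ commutatorSpan k (MonoidAlgebra k (FreeMonoid (Fin n))) := by
  rw [← mul_one c, ← MonoidAlgebra.smul_single', map_smul]
  refine Submodule.smul_mem _ c ?_
  simpa [eulerDefect_apply, cycDeriv_single, wordWeight]
    using sum_smul_of_mul_cycDerivWord_sub_mem_commutatorSpan (k := k) w u.toList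

theorem noncommutative_euler_identity_general
    (w : Fin n → ℕ) (N : ℕ)
    (Φ : MonoidAlgebra k (FreeMonoid (Fin n)))
    (hΦ : ∀ u ∈ Φ.coeff.support, wordWeight w u = N) :
    ∑ i, (w i : k) •
        (MonoidAlgebra.single (FreeMonoid.of i) (1 : k) * cycDeriv k i Φ)
        - (N : k) • Φ
      ∈ Submodule.span k
          {x : MonoidAlgebra k (FreeMonoid (Fin n)) | ∃ f g, x = f * g - g * f} := by
  rw [← eulerDefect_apply (k := k), ← MonoidAlgebra.sum_coeff_single Φ, Finsupp.sum, map_sum]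
  refine Submodule.sum_mem _ fun u hu => ?_
  rw [← hΦ u hu]
  exact eulerDefect_single_mem_commutatorSpan w u _

theorem noncommutative_euler_identity
    (w : Fin n → ℕ) (hw : ∀ i, 0 < w i) (N : ℕ)
    (Φ : MonoidAlgebra k (FreeMonoid (Fin n)))
    (hΦ : ∀ u ∈ Φ.coeff.support, wordWeight w u = N) :
    ∑ i, (w i : k) •
        (MonoidAlgebra.single (FreeMonoid.of i) (1 : k) * cycDeriv k i Φ)
        - (N : k) • Φ
      ∈ Submodule.span k
          {x : MonoidAlgebra k (FreeMonoid (Fin n)) | ∃ f g, x = f * g - g * f} :=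
  noncommutative_euler_identity_general w N Φ hΦ

end
end
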